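/- arXiv:1801.08458 — 3 statements merged into one kernel-verified Lean document; each statement's English description precedes it below -/
import Mathlib

section
/- If B is a p-basis of A over k and S ⊂ A is a multiplicative subset containing no nilpotent elements, then the image of B in S⁻¹A is a p-basis of S⁻¹A over k. -/
open scoped TensorProduct

/-- The monomial `∏ b^(α b)` associated to a finitely supported exponent tuple on `B`. -/
noncomputable def pMonomial {A : Type*} [CommRing A] {B : Set A} (α : B →₀ ℕ) : A :=
  α.prod fun b n => (b : A) ^ n

/-- `B` is `p`-independent over `k`: the `p`-monomials in `B` are linearly independent
over the subring `A^p[k]`. -/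
def IsPIndependent (k : Type*) {A : Type*} [CommRing k] [CommRing A] [Algebra k A]
    (p : ℕ) (B : Set A) : Prop :=
  LinearIndependent (Algebra.adjoin k (Set.range fun a : A => a ^ p))
    (fun α : {α : B →₀ ℕ // ∀ b, α b < p} => pMonomial α.1)

/-- `B` is a `p`-basis of `A` over `k`. -/
def IsPBasis (k : Type*) {A : Type*} [CommRing k] [CommRing A] [Algebra k A]
    (p : ℕ) (B : Set A) : Prop :=
  IsPIndependent k p B ∧
    Algebra.adjoin k ((Set.range fun a : A => a ^ p) ∪ B) = ⊤

/-- An absolute `p`-basis: a `p`-basis over the prime field (equivalently over `ℤ`). -/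
def IsAbsolutePBasis {A : Type*} [CommRing A] (p : ℕ) (B : Set A) : Prop :=
  IsPBasis ℤ p B

/-- `B` is a differential basis of `A` over `k`. -/
def IsDifferentialBasis (k : Type*) {A : Type*} [CommRing k] [CommRing A] [Algebra k A]
    (B : Set A) : Prop :=
  ∃ bas : Module.Basis B A (KaehlerDifferential k A),
    ∀ b : B, bas b = KaehlerDifferential.D k A (b : A)

/-- Regular local ring: noetherian local ring whose maximal ideal is generated by
(Krull-)dimension many elements. -/
def IsRegularLocalRing' (R : Type*) [CommRing R] : Prop :=
  IsLocalRing R ∧ IsNoetherianRing R ∧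
    ∃ (n : ℕ) (z : Fin n → R), (Ideal.span (Set.range z)).IsMaximal ∧
      ringKrullDim R = n

/-- Regular ring: noetherian and all localizations at primes are regular local. -/
def IsRegularRing' (A : Type*) [CommRing A] : Prop :=
  IsNoetherianRing A ∧ ∀ (P : Ideal A) (hP : P.IsPrime), IsRegularLocalRing' (Localization.AtPrime P)

/-- Differential operators of order at most `n` over `k`, defined inductively. -/
def IsDiffOp (k A M : Type*) [CommRing k] [CommRing A] [Algebra k A]
    [AddCommGroup M] [Module A M] [Module k M] [IsScalarTower k A M] :
    ℕ → (A → M) → Prop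
  | 0, D => IsLinearMap A D
  | (n + 1), D => IsLinearMap k D ∧
      ∀ a : A, IsDiffOp k A M n (fun f => a • D f - D (a * f))

/-- Product of binomial coefficients `∏_b C(α_b, β_b)`. -/
noncomputable def pBinom {A : Type*} [CommRing A] {B : Set A} (α β : B →₀ ℕ) : ℕ :=
  letI := Classical.decEq A
  ∏ b ∈ α.support ∪ β.support, Nat.choose (α b) (β b)

/-- Product of multinomial coefficients `∏_b (β_b+β'_b)!/(β_b!β'_b!)`. -/
noncomputable def pMultinom {A : Type*} [CommRing A] {B : Set A} (β β' : B →₀ ℕ) : ℕ :=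
  letI := Classical.decEq A
  ∏ b ∈ β.support ∪ β'.support, Nat.choose (β b + β' b) (β b)

/-- Height of an ideal: the infimum of the Krull dimensions of localizations
at primes containing it. -/
noncomputable def idealHeight {R : Type*} [CommRing R] (I : Ideal R) : WithBot (WithTop ℕ) :=
  ⨅ Q : {Q : Ideal R // Q.IsPrime ∧ I ≤ Q},
    ringKrullDim (Localization (@Ideal.primeCompl R _ Q.1 Q.2.1))

/-- Differential saturation of an ideal by absolute differential operators of order `≤ n`. -/
noncomputable def diffSat {A : Type*} [CommRing A] (n : ℕ) (I : Ideal A) : Ideal A :=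
  Ideal.span {g | ∃ f ∈ I, ∃ Δ : A → A, IsDiffOp ℤ A A n Δ ∧ g = Δ f}

/-!
Localizing at `S` is the same as localizing at `S^p = {s^p | s ∈ S}`, which lies in `A^p[k]`,
and the localization of `A^p[k]` at `S^p` is `L^p[k]`: a denominator `s` may always be replaced
by `s^p`. Hence the linear independence of the reduced `p`-monomials of `B` over `A^p[k]`
localizes to linear independence of their images over `L^p[k]`. As `0 ∉ S`, the ring `L` is
nonzero, so independence of the monomials of degree one makes `B → L` injective and the reduced
monomials of the image of `B` are exactly the images of those of `B`. Generation follows from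
`a / s = a s^(p-1) · (1 / s)^p`.
-/

theorem IsLocalization.map_powMonoidHom {A L : Type*} [CommRing A] [CommRing L] [Algebra A L]
    (S : Submonoid A) [IsLocalization S L] {p : ℕ} (hp : 0 < p) :
    IsLocalization (S.map (powMonoidHom p)) L :=
  (IsLocalization.iff_of_le_of_exists_dvd _ S
    (Submonoid.map_le_iff_le_comap.mpr fun s hs => pow_mem hs p)
    (fun s hs => ⟨s ^ p, Submonoid.mem_map_of_mem _ hs, dvd_pow_self s hp.ne'⟩)).mpr ‹_›

section PPowerSubalgebra

variable (k : Type*) {A A' : Type*} [CommRing k] [CommRing A] [CommRing A'] [Algebra k A]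
  [Algebra k A'] (p : ℕ)

variable (A) in
/-- The ring `A^p[k]`. -/
def pPowerSubalgebra : Subalgebra k A := Algebra.adjoin k (Set.range fun a : A => a ^ p)

theorem pow_mem_pPowerSubalgebra (a : A) : a ^ p ∈ pPowerSubalgebra k A p :=
  Algebra.subset_adjoin ⟨a, rfl⟩

variable (A) in
def pPowerSubalgebra.powHom : A →* pPowerSubalgebra k A p where
  toFun a := ⟨a ^ p, pow_mem_pPowerSubalgebra k p a⟩
  map_one' := Subtype.ext (one_pow p)
  map_mul' a b := Subtype.ext (mul_pow a b p)

theorem pPowerSubalgebra.map_le (f : A →ₐ[k] A') :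
    (pPowerSubalgebra k A p).map f ≤ pPowerSubalgebra k A' p := by
  rw [pPowerSubalgebra, AlgHom.map_adjoin, ← Set.range_comp]
  exact Algebra.adjoin_mono (Set.range_subset_iff.mpr fun a => ⟨f a, (map_pow f a p).symm⟩)

def pPowerSubalgebra.mapHom (f : A →ₐ[k] A') :
    pPowerSubalgebra k A p →ₐ[k] pPowerSubalgebra k A' p :=
  (f.comp (pPowerSubalgebra k A p).val).codRestrict _ fun x => map_le k p f ⟨x, x.2, rfl⟩

variable {L : Type*} [CommRing L] [Algebra A L] [Algebra k L] [IsScalarTower k A L]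

instance : Algebra (pPowerSubalgebra k A p) (pPowerSubalgebra k L p) :=
  (pPowerSubalgebra.mapHom k p (IsScalarTower.toAlgHom k A L)).toRingHom.toAlgebra

instance : IsScalarTower (pPowerSubalgebra k A p) (pPowerSubalgebra k L p) L :=
  IsScalarTower.of_algebraMap_eq fun _ => rfl

variable {p} (S : Submonoid A)

theorem pPowerSubalgebra.algebraMapSubmonoid_map_powHom :
    Algebra.algebraMapSubmonoid A (S.map (powHom k A p)) = S.map (powMonoidHom p) := by
  rw [Algebra.algebraMapSubmonoid, ← Submonoid.map_coe_toMonoidHom, Submonoid.map_map]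
  rfl

theorem pPowerSubalgebra.exists_pow_mul_eq_algebraMap [IsLocalization S L] {c : L}
    (hc : c ∈ pPowerSubalgebra k L p) :
    ∃ s : S, ∃ r ∈ pPowerSubalgebra k A p, algebraMap A L s ^ p * c = algebraMap A L r := by
  induction hc using Algebra.adjoin_induction with
  | mem x hx =>
    obtain ⟨y, rfl⟩ := hx
    obtain ⟨⟨a, s⟩, rfl⟩ := IsLocalization.mk'_surjective S y
    refine ⟨s, a ^ p, pow_mem_pPowerSubalgebra k p a, ?_⟩
    rw [← mul_pow, IsLocalization.mk'_spec', map_pow]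
  | algebraMap r =>
    refine ⟨1, algebraMap k A r, Subalgebra.algebraMap_mem _ r, ?_⟩
    rw [OneMemClass.coe_one, map_one, one_pow, one_mul, IsScalarTower.algebraMap_apply k A L]
  | add x y _ _ ihx ihy =>
    obtain ⟨s₁, r₁, hr₁, e₁⟩ := ihx
    obtain ⟨s₂, r₂, hr₂, e₂⟩ := ihy
    refine ⟨s₁ * s₂, s₂ ^ p * r₁ + s₁ ^ p * r₂, add_mem
      (mul_mem (pow_mem_pPowerSubalgebra k p _) hr₁)
      (mul_mem (pow_mem_pPowerSubalgebra k p _) hr₂), ?_⟩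
    simp only [Submonoid.coe_mul, map_mul, map_add, map_pow, ← e₁, ← e₂]
    ring
  | mul x y _ _ ihx ihy =>
    obtain ⟨s₁, r₁, hr₁, e₁⟩ := ihx
    obtain ⟨s₂, r₂, hr₂, e₂⟩ := ihy
    refine ⟨s₁ * s₂, r₁ * r₂, mul_mem hr₁ hr₂, ?_⟩
    simp only [Submonoid.coe_mul, map_mul, ← e₁, ← e₂]
    ring

theorem pPowerSubalgebra.isLocalization [IsLocalization S L] (hp : 0 < p) :
    IsLocalization (S.map (powHom k A p)) (pPowerSubalgebra k L p) where
  map_units := by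
    rintro ⟨_, s, hs, rfl⟩
    refine IsUnit.of_mul_eq_one
      ⟨IsLocalization.mk' L 1 ⟨s, hs⟩ ^ p, pow_mem_pPowerSubalgebra k p _⟩ ?_
    apply Subtype.ext
    change algebraMap A L (s ^ p) * IsLocalization.mk' L 1 ⟨s, hs⟩ ^ p = 1
    rw [map_pow, ← mul_pow, IsLocalization.mk'_spec'_mk, map_one, one_pow]
  surj := by
    rintro ⟨c, hc⟩
    obtain ⟨s, r, hr, e⟩ := exists_pow_mul_eq_algebraMap k S hc
    refine ⟨(⟨r, hr⟩, ⟨powHom k A p s, Submonoid.mem_map_of_mem _ s.2⟩), Subtype.ext ?_⟩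
    change c * algebraMap A L (s ^ p) = algebraMap A L r
    rw [map_pow, mul_comm, e]
  exists_of_eq := by
    rintro ⟨x, hx⟩ ⟨y, hy⟩ hxy
    obtain ⟨c, hc⟩ := (IsLocalization.eq_iff_exists S L).mp (congrArg Subtype.val hxy)
    refine ⟨⟨powHom k A p c, Submonoid.mem_map_of_mem _ c.2⟩, Subtype.ext ?_⟩
    obtain ⟨n, rfl⟩ : ∃ n, p = n + 1 := ⟨p - 1, by omega⟩
    change (c : A) ^ (n + 1) * x = (c : A) ^ (n + 1) * y
    rw [pow_succ, mul_assoc, mul_assoc]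
    exact congrArg _ hc

theorem IsPIndependent.linearIndependent_algebraMap [IsLocalization S L] (hp : 0 < p)
    {B : Set A} (hB : IsPIndependent k p B) :
    LinearIndependent (pPowerSubalgebra k L p)
      fun α : {α : B →₀ ℕ // ∀ b, α b < p} => algebraMap A L (pMonomial α.1) := by
  have := pPowerSubalgebra.isLocalization k (L := L) S hp
  have : IsLocalization
      (Algebra.algebraMapSubmonoid A (S.map (pPowerSubalgebra.powHom k A p))) L := by
    rw [pPowerSubalgebra.algebraMapSubmonoid_map_powHom]
    exact IsLocalization.map_powMonoidHom S hp
  exact hB.localization_localization (pPowerSubalgebra k L p)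
    (S.map (pPowerSubalgebra.powHom k A p)) L

theorem IsLocalization.mk'_eq_algebraMap_mul_pow [IsLocalization S L] (hp : 0 < p) (a : A)
    (s : S) :
    IsLocalization.mk' L a s =
      algebraMap A L (a * s ^ (p - 1)) * IsLocalization.mk' L 1 s ^ p := by
  obtain ⟨n, rfl⟩ : ∃ n, p = n + 1 := ⟨p - 1, by omega⟩
  calc IsLocalization.mk' L a s
      = algebraMap A L a * (algebraMap A L s * IsLocalization.mk' L 1 s) ^ n *
          IsLocalization.mk' L 1 s := by
        rw [IsLocalization.mk'_spec', map_one, one_pow, mul_one, IsLocalization.mk'_eq_mul_mk'_one]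
    _ = _ := by rw [map_mul, map_pow, Nat.add_sub_cancel]; ring

theorem adjoin_pow_union_image_algebraMap_eq_top [IsLocalization S L] (hp : 0 < p) {B : Set A}
    (hB : Algebra.adjoin k ((Set.range fun a : A => a ^ p) ∪ B) = ⊤) :
    Algebra.adjoin k ((Set.range fun x : L => x ^ p) ∪ algebraMap A L '' B) = ⊤ := by
  have hA : ∀ a : A, algebraMap A L a ∈
      Algebra.adjoin k ((Set.range fun x : L => x ^ p) ∪ algebraMap A L '' B) := by
    intro a
    have hle : (Algebra.adjoin k ((Set.range fun a : A => a ^ p) ∪ B)).map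
        (IsScalarTower.toAlgHom k A L) ≤
        Algebra.adjoin k ((Set.range fun x : L => x ^ p) ∪ algebraMap A L '' B) := by
      rw [AlgHom.map_adjoin, Set.image_union, ← Set.range_comp]
      refine Algebra.adjoin_mono (Set.union_subset_union ?_ subset_rfl)
      exact Set.range_subset_iff.mpr fun a => ⟨algebraMap A L a, (map_pow _ a p).symm⟩
    exact hle ⟨a, hB ▸ Algebra.mem_top, rfl⟩
  refine eq_top_iff.mpr fun x _ => ?_
  obtain ⟨⟨a, s⟩, rfl⟩ := IsLocalization.mk'_surjective S x
  change IsLocalization.mk' L a s ∈ _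
  rw [IsLocalization.mk'_eq_algebraMap_mul_pow S hp]
  exact mul_mem (hA _) (Algebra.subset_adjoin (Or.inl ⟨_, rfl⟩))

end PPowerSubalgebra

theorem pMonomial_single_one {A : Type*} [CommRing A] {B : Set A} (b : B) :
    pMonomial (Finsupp.single b 1) = (b : A) := by
  simp [pMonomial]

theorem map_pMonomial {A A' : Type*} [CommRing A] [CommRing A'] {B : Set A} {B' : Set A'}
    (f : A →+* A') (e : B ≃ B') (he : ∀ b, (e b : A') = f b) (α : B →₀ ℕ) :
    f (pMonomial α) = pMonomial (Finsupp.equivMapDomain e α) := by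
  simp only [pMonomial, map_finsuppProd, map_pow, Finsupp.prod_equivMapDomain, he]

theorem Set.InjOn.of_linearIndependent_pMonomial {R A M : Type*} [Semiring R] [Nontrivial R]
    [CommRing A] [AddCommMonoid M] [Module R M] {p : ℕ} (hp : 1 < p) {B : Set A} {f : A → M}
    (h : LinearIndependent R
      fun α : {α : B →₀ ℕ // ∀ b, α b < p} => f (pMonomial α.1)) :
    Set.InjOn f B := by
  classical
  intro b₁ h₁ b₂ h₂ he
  let ι : B → {α : B →₀ ℕ // ∀ b, α b < p} := fun b =>
    ⟨Finsupp.single b 1, fun c => by rw [Finsupp.single_apply]; split_ifs <;> omega⟩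
  have hι : ι ⟨b₁, h₁⟩ = ι ⟨b₂, h₂⟩ :=
    h.injective (by simpa only [ι, pMonomial_single_one] using he)
  exact congrArg Subtype.val (Finsupp.single_left_injective one_ne_zero (congrArg Subtype.val hι))

theorem LinearIndependent.pMonomial_image {R A A' : Type*} [Semiring R] [CommRing A]
    [CommRing A'] [Module R A'] {p : ℕ} {B : Set A} (f : A →+* A') (hf : Set.InjOn f B)
    (h : LinearIndependent R
      fun α : {α : B →₀ ℕ // ∀ b, α b < p} => f (pMonomial α.1)) :
    LinearIndependent R fun α : {α : f '' B →₀ ℕ // ∀ b, α b < p} => pMonomial α.1 := by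
  let e := Equiv.Set.imageOfInjOn f B hf
  let E : {α : B →₀ ℕ // ∀ b, α b < p} ≃ {α : f '' B →₀ ℕ // ∀ b, α b < p} :=
    (Finsupp.equivCongrLeft e).subtypeEquiv fun α => by
      simp only [Finsupp.equivCongrLeft_apply, Finsupp.equivMapDomain_apply]
      exact e.symm.forall_congr_right.symm
  refine (linearIndependent_equiv E).mp ?_
  convert h using 2 with α
  exact (map_pMonomial f e (fun _ => rfl) α.1).symm

theorem IsPBasis.image_algebraMap_of_isLocalization {k A L : Type*} [CommRing k] [CommRing A]
    [Algebra k A] [CommRing L] [Algebra A L] [Algebra k L] [IsScalarTower k A L] {p : ℕ}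
    (hp : 1 < p) {B : Set A} (hB : IsPBasis k p B) (S : Submonoid A) [IsLocalization S L]
    (hS : (0 : A) ∉ S) :
    IsPBasis k p (algebraMap A L '' B) := by
  have : Nontrivial L :=
    not_subsingleton_iff_nontrivial.mp (mt (IsLocalization.subsingleton_iff (M := S)).mp hS)
  have hind := hB.1.linearIndependent_algebraMap k S (L := L) (by omega)
  exact ⟨hind.pMonomial_image _ (Set.InjOn.of_linearIndependent_pMonomial hp hind),
    adjoin_pow_union_image_algebraMap_eq_top k S (by omega) hB.2⟩

theorem statement2_general {k A : Type*} [CommRing k] [CommRing A] [Algebra k A]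
    (p : ℕ) [Fact p.Prime] (B : Set A) (h : IsPBasis k p B)
    (S : Submonoid A) (hS : ∀ s ∈ S, ¬ IsNilpotent s) :
    IsPBasis k p (algebraMap A (Localization S) '' B) :=
  h.image_algebraMap_of_isLocalization (Fact.out : p.Prime).one_lt S
    fun h0 => hS 0 h0 IsNilpotent.zero

theorem statement2 {k A : Type*} [CommRing k] [CommRing A] [Algebra k A]
    (p : ℕ) [Fact p.Prime] [CharP A p] (B : Set A) (h : IsPBasis k p B)
    (S : Submonoid A) (hS : ∀ s ∈ S, ¬ IsNilpotent s) :
    IsPBasis k p (algebraMap A (Localization S) '' B) :=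
  statement2_general p B h S hS
end

section
/- If B is a p-basis of A over k and a p-monomial b₁^{α₁}⋯b_r^{α_r} (with b_i ∈ B, 0 ≤ α_i < p) has a zero-divisor a in A, i.e. a·b₁^{α₁}⋯b_r^{α_r} = 0, then a is nilpotent. -/
open scoped TensorProduct

/-!
Write `a = ∑ c_α m_α` over the reduced `p`-monomials `m_α` (all exponents `< p`) with
coefficients in `A^p[k]`. Multiplying by the reduced monomial `m_δ` gives
`∑ c_α m_{⌊(α+δ)/p⌋}^p m_{(α+δ) mod p}`, and `α ↦ (α+δ) mod p` is injective, so `p`-independence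
yields `c_α m_{⌊(α+δ)/p⌋}^p = 0`. As `⌊(α+δ)/p⌋ ≤ α`, this forces `(c_α m_α)^p = 0`, so `a` is a
sum of nilpotents.
-/

theorem mul_pow_eq_zero_of_mul_pow_eq_zero_of_dvd {R : Type*} [CommSemiring R] {c y z : R}
    {n : ℕ} (hn : n ≠ 0) (h : c * y ^ n = 0) (hyz : y ∣ z) : (c * z) ^ n = 0 := by
  obtain ⟨w, rfl⟩ := hyz
  obtain ⟨m, rfl⟩ := Nat.exists_eq_succ_of_ne_zero hn
  calc (c * (y * w)) ^ (m + 1) = c ^ m * (c * y ^ (m + 1)) * w ^ (m + 1) := by ring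
    _ = 0 := by rw [h, mul_zero, zero_mul]

section Exponents

variable {ι : Type*} {p : ℕ}

variable (p) in
noncomputable def pQuot (f : ι →₀ ℕ) : ι →₀ ℕ :=
  f.mapRange (· / p) (Nat.zero_div p)

variable (p) in
noncomputable def pRem (f : ι →₀ ℕ) : ι →₀ ℕ :=
  f.mapRange (· % p) (Nat.zero_mod p)

lemma smul_pQuot_add_pRem (f : ι →₀ ℕ) : p • pQuot p f + pRem p f = f := by
  ext i
  exact Nat.div_add_mod (f i) p

lemma pRem_lt (hp : 0 < p) (f : ι →₀ ℕ) (i : ι) : pRem p f i < p :=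
  Nat.mod_lt _ hp

/-- When `f` and `δ` are reduced, at most one carry occurs in each coordinate of `f + δ`. -/
lemma pQuot_add_le (hp : 0 < p) {f δ : ι →₀ ℕ} (hf : ∀ i, f i < p) (hδ : ∀ i, δ i < p) :
    pQuot p (f + δ) ≤ f := by
  intro i
  change (f i + δ i) / p ≤ f i
  rcases Nat.eq_zero_or_pos (f i) with h0 | hpos
  · rw [h0, zero_add, Nat.div_eq_of_lt (hδ i)]
  · exact Nat.lt_succ_iff.mp ((Nat.div_lt_iff_lt_mul hp).2 (by nlinarith [hf i, hδ i]))

lemma pRem_add_injective {f g δ : ι →₀ ℕ} (hf : ∀ i, f i < p) (hg : ∀ i, g i < p)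
    (h : pRem p (f + δ) = pRem p (g + δ)) : f = g := by
  ext i
  have hi : f i ≡ g i [MOD p] := Nat.ModEq.add_right_cancel' (δ i) (DFunLike.congr_fun h i)
  rwa [Nat.ModEq, Nat.mod_eq_of_lt (hf i), Nat.mod_eq_of_lt (hg i)] at hi

end Exponents

section PMonomial

variable {A : Type*} [CommRing A] {B : Set A}

lemma pMonomial_zero : pMonomial (0 : B →₀ ℕ) = 1 :=
  Finsupp.prod_zero_index

lemma pMonomial_add (f g : B →₀ ℕ) : pMonomial (f + g) = pMonomial f * pMonomial g :=
  Finsupp.prod_add_index' (fun _ => pow_zero _) (fun _ _ _ => pow_add _ _ _)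

lemma pMonomial_nsmul (n : ℕ) (f : B →₀ ℕ) : pMonomial (n • f) = pMonomial f ^ n := by
  induction n with
  | zero => rw [zero_smul, pMonomial_zero, pow_zero]
  | succ n ih => rw [succ_nsmul, pMonomial_add, ih, pow_succ]

lemma pMonomial_dvd_pMonomial {f g : B →₀ ℕ} (h : f ≤ g) : pMonomial f ∣ pMonomial g :=
  ⟨pMonomial (g - f), by rw [← pMonomial_add, add_tsub_cancel_of_le h]⟩

lemma pMonomial_eq_pQuot_pow_mul_pRem (p : ℕ) (f : B →₀ ℕ) :
    pMonomial f = pMonomial (pQuot p f) ^ p * pMonomial (pRem p f) := by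
  conv_lhs => rw [← smul_pQuot_add_pRem (p := p) f]
  rw [pMonomial_add, pMonomial_nsmul]

lemma exists_pMonomial_eq_prod {p : ℕ} (hp : 0 < p) {r : ℕ} {b : Fin r → A}
    (hbB : ∀ i, b i ∈ B) (hinj : Function.Injective b) {α : Fin r → ℕ} (hα : ∀ i, α i < p) :
    ∃ δ : B →₀ ℕ, (∀ x, δ x < p) ∧ pMonomial δ = ∏ i, b i ^ α i := by
  let e : Fin r ↪ B := ⟨fun i => ⟨b i, hbB i⟩, fun i j hij => hinj (congrArg Subtype.val hij)⟩
  refine ⟨Finsupp.embDomain e (Finsupp.equivFunOnFinite.symm α), fun x => ?_, ?_⟩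
  · by_cases hx : x ∈ Set.range e
    · obtain ⟨i, rfl⟩ := hx
      rw [Finsupp.embDomain_apply_self]
      exact hα i
    · rw [Finsupp.embDomain_of_notMem_range _ _ _ hx]
      exact hp
  · rw [pMonomial, Finsupp.prod_embDomain,
      Finsupp.prod_of_support_subset _ (Finset.subset_univ _) _ fun _ _ => pow_zero _]
    rfl

end PMonomial

section PBasis

variable (k : Type*) {A : Type*} [CommRing k] [CommRing A] [Algebra k A] {B : Set A} {p : ℕ}

local notation "Aᵖ" => Algebra.adjoin k (Set.range fun a : A => a ^ p)

lemma pow_mem_adjoin_range_pow (x : A) : x ^ p ∈ Aᵖ :=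
  Algebra.subset_adjoin ⟨x, rfl⟩

lemma pMonomial_mem_span_reduced (hp : 0 < p) (f : B →₀ ℕ) :
    pMonomial f ∈ Submodule.span Aᵖ
      (Set.range fun α : {α : B →₀ ℕ // ∀ b, α b < p} => pMonomial α.1) := by
  rw [pMonomial_eq_pQuot_pow_mul_pRem p f]
  exact Submodule.smul_mem _
    (⟨pMonomial (pQuot p f) ^ p, pow_mem_adjoin_range_pow k _⟩ : Aᵖ)
    (Submodule.subset_span ⟨⟨pRem p f, pRem_lt hp f⟩, rfl⟩)

lemma span_reduced_pMonomial_eq_top (hp : 0 < p)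
    (htop : Algebra.adjoin k ((Set.range fun a : A => a ^ p) ∪ B) = ⊤) :
    Submodule.span Aᵖ
      (Set.range fun α : {α : B →₀ ℕ // ∀ b, α b < p} => pMonomial α.1) = ⊤ := by
  have hB : Algebra.adjoin Aᵖ B = ⊤ := Subalgebra.restrictScalars_injective k <| by
    rw [← Algebra.adjoin_union_eq_adjoin_adjoin, htop, Subalgebra.restrictScalars_top]
  rw [eq_top_iff, ← Algebra.top_toSubmodule, ← hB, Algebra.adjoin_eq_span,
    Submodule.span_le]
  intro x hx
  rw [← Subtype.range_coe (s := B)] at hx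
  obtain ⟨f, rfl⟩ := Submonoid.exists_finsupp_of_mem_closure_range _ x hx
  exact pMonomial_mem_span_reduced k hp f

lemma coeff_mul_pow_pMonomial_pQuot_eq_zero (hind : IsPIndependent k p B) (hp : 0 < p)
    {δ : B →₀ ℕ} (c : {α : B →₀ ℕ // ∀ b, α b < p} →₀ Aᵖ)
    (hc : (c.sum fun α r => r • pMonomial α.1) * pMonomial δ = 0)
    (α : {α : B →₀ ℕ // ∀ b, α b < p}) :
    (c α : A) * pMonomial (pQuot p (α.1 + δ)) ^ p = 0 := by
  let σ : {α : B →₀ ℕ // ∀ b, α b < p} → {α : B →₀ ℕ // ∀ b, α b < p} :=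
    fun α => ⟨pRem p (α.1 + δ), pRem_lt hp _⟩
  have hσ : σ.Injective := fun α β h =>
    Subtype.ext (pRem_add_injective α.2 β.2 (congrArg Subtype.val h))
  let d : {α : B →₀ ℕ // ∀ b, α b < p} → Aᵖ := fun α =>
    c α * ⟨pMonomial (pQuot p (α.1 + δ)) ^ p, pow_mem_adjoin_range_pow k _⟩
  have hsum : ∑ α ∈ c.support, d α • pMonomial (σ α).1 = 0 := by
    rw [← hc, Finsupp.sum, Finset.sum_mul]
    refine Finset.sum_congr rfl fun α _ => ?_
    change (c α : A) * _ * _ = (c α : A) * _ * _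
    rw [mul_assoc, mul_assoc, ← pMonomial_add, ← pMonomial_eq_pQuot_pow_mul_pRem]
  by_cases hα : α ∈ c.support
  · simpa [d] using
      congrArg Subtype.val (linearIndependent_iff'.mp (hind.comp σ hσ) _ d hsum α hα)
  · rw [Finsupp.notMem_support_iff.mp hα, ZeroMemClass.coe_zero, zero_mul]

end PBasis

theorem statement3_general {k A : Type*} [CommRing k] [CommRing A] [Algebra k A]
    (p : ℕ) [Fact p.Prime] (B : Set A) (h : IsPBasis k p B)
    (r : ℕ) (b : Fin r → A) (hbB : ∀ i, b i ∈ B) (hinj : Function.Injective b)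
    (α : Fin r → ℕ) (hα : ∀ i, α i < p)
    (a : A) (ha : a * ∏ i, b i ^ α i = 0) :
    IsNilpotent a := by
  have hp : 0 < p := (Fact.out : p.Prime).pos
  obtain ⟨δ, hδ, hδa⟩ := exists_pMonomial_eq_prod hp hbB hinj hα
  have ha_span : a ∈ Submodule.span (Algebra.adjoin k (Set.range fun a : A => a ^ p))
      (Set.range fun α : {α : B →₀ ℕ // ∀ b, α b < p} => pMonomial α.1) := by
    rw [span_reduced_pMonomial_eq_top k hp h.2]
    exact Submodule.mem_top
  obtain ⟨c, rfl⟩ := Finsupp.mem_span_range_iff_exists_finsupp.mp ha_span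
  rw [← hδa] at ha
  refine isNilpotent_sum fun β _ => ⟨p, ?_⟩
  exact mul_pow_eq_zero_of_mul_pow_eq_zero_of_dvd hp.ne'
    (coeff_mul_pow_pMonomial_pQuot_eq_zero k h.1 hp c ha β)
    (pMonomial_dvd_pMonomial (pQuot_add_le hp β.2 hδ))

theorem statement3 {k A : Type*} [CommRing k] [CommRing A] [Algebra k A]
    (p : ℕ) [Fact p.Prime] [CharP A p] (B : Set A) (h : IsPBasis k p B)
    (r : ℕ) (b : Fin r → A) (hbB : ∀ i, b i ∈ B) (hinj : Function.Injective b)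
    (α : Fin r → ℕ) (hα : ∀ i, α i < p)
    (a : A) (ha : a * ∏ i, b i ^ α i = 0) :
    IsNilpotent a :=
  statement3_general p B h r b hbB hinj α hα a ha
end

section
/- Let (R, M, K) be a regular local ring of characteristic p > 0 with an absolute p-basis of the form B₀ ∪ {z₁,…,z_d}, where z₁,…,z_d is a regular system of parameters and B₀ ∩ M ⊂ {0}. Then the image of B₀ in K = R/M is an absolute p-basis of K; in particular the image of B₀ in K is algebraically independent over F_p, and F_p(B₀) is a quasi-coefficient field of R. -/
open scoped TensorProduct

/-!
Let `S ⊆ R` be the subring generated by `p`-th powers. The reduced monomials (all exponents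
`< p`) in `B = B₀ ∪ {zᵢ}` form an `S`-basis of `R`. The maximal ideal `M = (zᵢ)` lies in the
`S`-span of the monomials in which some `zᵢ` occurs. Such a monomial is a `p`-th power times a
reduced monomial, and either the reduced part still contains some `zᵢ` or a factor `zᵢ` went into
the `p`-th power. So an element of `M` has its coordinates at the reduced monomials in `B₀` alone
in `M`, and these monomials stay independent over `K^p` in `K = R/M`. The `zᵢ` vanish in `K`, so
the image of `B₀` is a `p`-basis of `K`.

A `p`-independent family `b` in a reduced ring of characteristic `p` is algebraically independent
over `𝔽_p`: write a relation as `P = ∑ r, Q_r(X ^ p) * X ^ r` with reduced `r`. Then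
`∑ r, Q_r(b) ^ p * b ^ r = 0`, so every `Q_r(b)` vanishes, and the `Q_r` have smaller degree.
Over `k = 𝔽_p(B₀)`, `Ω[K⁄k] = 0` because `K = K^p[B₀]`. A `k`-map `f : K → B' ⧸ I` with `I² = 0`
lifts by sending `c ^ p` to the `p`-th power of any lift of `f c`, which is well defined since
`I ^ p = 0`, and `b ∈ B₀` to `b`.
-/

open MvPolynomial

section Monomials

variable {ι A : Type*} [CommRing A]

noncomputable def prodPow (v : ι → A) (α : ι →₀ ℕ) : A := α.prod (v · ^ ·)

@[simp]
lemma prodPow_zero (v : ι → A) : prodPow v 0 = 1 := Finsupp.prod_zero_index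

lemma prodPow_add (v : ι → A) (α β : ι →₀ ℕ) :
    prodPow v (α + β) = prodPow v α * prodPow v β :=
  Finsupp.prod_add_index' (fun _ => pow_zero _) fun _ => pow_add _

@[simp]
lemma prodPow_single (v : ι → A) (i : ι) (n : ℕ) : prodPow v (Finsupp.single i n) = v i ^ n :=
  Finsupp.prod_single_index (pow_zero _)

lemma prodPow_nsmul (v : ι → A) (n : ℕ) (α : ι →₀ ℕ) : prodPow v (n • α) = prodPow v α ^ n := by
  induction n with
  | zero => rw [zero_smul, pow_zero, prodPow_zero]
  | succ n ih => rw [succ_nsmul, prodPow_add, ih, pow_succ]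

lemma prodPow_pow (v : ι → A) (n : ℕ) (α : ι →₀ ℕ) :
    prodPow (v · ^ n) α = prodPow v α ^ n := by
  simp only [prodPow, Finsupp.prod, ← Finset.prod_pow, ← pow_mul, mul_comm]

lemma map_prodPow {A' : Type*} [CommRing A'] (f : A →+* A') (v : ι → A) (α : ι →₀ ℕ) :
    f (prodPow v α) = prodPow (f ∘ v) α := by
  simp only [prodPow, Finsupp.prod, map_prod, map_pow, Function.comp_apply]

lemma prodPow_embDomain {ι' : Type*} (v : ι' → A) (e : ι ↪ ι') (α : ι →₀ ℕ) :
    prodPow v (α.embDomain e) = prodPow (v ∘ e) α :=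
  Finsupp.prod_embDomain ..

lemma dvd_prodPow (v : ι → A) {α : ι →₀ ℕ} {i : ι} (hi : i ∈ α.support) : v i ∣ prodPow v α :=
  (dvd_pow_self _ (Finsupp.mem_support_iff.mp hi)).trans (Finset.dvd_prod_of_mem _ hi)

noncomputable def expDiv (p : ℕ) (α : ι →₀ ℕ) : ι →₀ ℕ := α.mapRange (· / p) (Nat.zero_div p)

noncomputable def expMod (p : ℕ) (α : ι →₀ ℕ) : ι →₀ ℕ := α.mapRange (· % p) (Nat.zero_mod p)

@[simp]
lemma expDiv_apply (p : ℕ) (α : ι →₀ ℕ) (i : ι) : expDiv p α i = α i / p := rfl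

@[simp]
lemma expMod_apply (p : ℕ) (α : ι →₀ ℕ) (i : ι) : expMod p α i = α i % p := rfl

lemma expMod_lt {p : ℕ} (hp : 0 < p) (α : ι →₀ ℕ) (i : ι) : expMod p α i < p :=
  Nat.mod_lt _ hp

lemma nsmul_expDiv_add_expMod (p : ℕ) (α : ι →₀ ℕ) : p • expDiv p α + expMod p α = α := by
  ext i
  simp [Nat.div_add_mod]

lemma prodPow_eq_pow_mul (v : ι → A) (p : ℕ) (α : ι →₀ ℕ) :
    prodPow v α = prodPow v (expDiv p α) ^ p * prodPow v (expMod p α) := by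
  conv_lhs => rw [← nsmul_expDiv_add_expMod p α]
  rw [prodPow_add, prodPow_nsmul]

lemma expDiv_eq_and_expMod_eq_iff {p : ℕ} {α β : ι →₀ ℕ} :
    expDiv p α = expDiv p β ∧ expMod p α = expMod p β ↔ α = β := by
  refine ⟨fun ⟨hd, hm⟩ => ?_, fun h => h ▸ ⟨rfl, rfl⟩⟩
  rw [← nsmul_expDiv_add_expMod p α, hd, hm, nsmul_expDiv_add_expMod]

end Monomials

namespace MvPolynomial

variable {σ C : Type*} [CommSemiring C]

noncomputable def pComponent [DecidableEq σ] (p : ℕ) (r : σ →₀ ℕ) (P : MvPolynomial σ C) :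
    MvPolynomial σ C :=
  ∑ m ∈ P.support with expMod p m = r, monomial (expDiv p m) (coeff m P)

lemma eval₂_eq_sum_pComponent [DecidableEq σ] {A : Type*} [CommRing A] (h : C →+* A)
    (g : σ → A) (p : ℕ) (P : MvPolynomial σ C) :
    eval₂ h g P = ∑ r ∈ P.support.image (expMod p),
      eval₂ h (g · ^ p) (pComponent p r P) * prodPow g r := by
  rw [eval₂_eq, ← Finset.sum_fiberwise_of_maps_to (g := expMod p)
    fun m hm => Finset.mem_image_of_mem _ hm]
  refine Finset.sum_congr rfl fun r _ => ?_
  rw [pComponent, eval₂_sum, Finset.sum_mul]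
  refine Finset.sum_congr (by congr) fun m hm => ?_
  rw [eval₂_monomial, ← (Finset.mem_filter.mp hm).2, mul_assoc]
  change _ = _ * (prodPow (g · ^ p) (expDiv p m) * _)
  rw [prodPow_pow, ← prodPow_eq_pow_mul]
  rfl

lemma coeff_expDiv_pComponent_expMod [DecidableEq σ] (p : ℕ) (P : MvPolynomial σ C) (m : σ →₀ ℕ) :
    coeff (expDiv p m) (pComponent p (expMod p m) P) = coeff m P := by
  rw [pComponent, coeff_sum, Finset.sum_eq_single m]
  · rw [coeff_monomial, if_pos rfl]
  · intro m' hm' hne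
    rw [coeff_monomial, if_neg fun h => hne (expDiv_eq_and_expMod_eq_iff.mp
      ⟨h, (Finset.mem_filter.mp hm').2⟩)]
  · intro hm
    rw [coeff_monomial, if_pos rfl]
    by_contra hc
    exact hm (Finset.mem_filter.mpr ⟨mem_support_iff.mpr hc, rfl⟩)

lemma eq_zero_of_pComponent_eq_zero [DecidableEq σ] (p : ℕ) {P : MvPolynomial σ C}
    (h : ∀ r ∈ P.support.image (expMod p), pComponent p r P = 0) : P = 0 := by
  ext m
  by_cases hm : m ∈ P.support
  · rw [← coeff_expDiv_pComponent_expMod, h _ (Finset.mem_image_of_mem _ hm), coeff_zero,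
      coeff_zero]
  · rw [notMem_support_iff.mp hm, coeff_zero]

lemma totalDegree_pComponent_le [DecidableEq σ] {p : ℕ} (hp : 0 < p) (r : σ →₀ ℕ)
    (P : MvPolynomial σ C) :
    (pComponent p r P).totalDegree ≤ P.totalDegree / p := by
  refine (totalDegree_finsetSum _ _).trans (Finset.sup_le fun m hm => ?_)
  refine (totalDegree_monomial_le _ _).trans ?_
  refine le_trans ?_ (Nat.div_le_div_right (le_totalDegree (Finset.mem_filter.mp hm).1))
  rw [Nat.le_div_iff_mul_le hp, Finsupp.sum, Finset.sum_mul]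
  calc ∑ i ∈ (expDiv p m).support, m i / p * p
      ≤ ∑ i ∈ (expDiv p m).support, m i := Finset.sum_le_sum fun i _ => Nat.div_mul_le_self _ _
    _ ≤ m.sum fun _ e => e := Finset.sum_le_sum_of_subset Finsupp.support_mapRange

end MvPolynomial

abbrev pPowers (A : Type*) [CommRing A] (p : ℕ) : Subalgebra ℤ A :=
  Algebra.adjoin ℤ (Set.range fun a : A => a ^ p)

abbrev ReducedExp (ι : Type*) (p : ℕ) := {α : ι →₀ ℕ // ∀ i, α i < p}

namespace ReducedExp

variable {ι ι' : Type*} {p : ℕ}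

noncomputable def embDomain (hp : 0 < p) (f : ι ↪ ι') (α : ReducedExp ι p) : ReducedExp ι' p :=
  ⟨α.1.embDomain f, fun i => by
    by_cases hi : i ∈ Set.range f
    · obtain ⟨a, rfl⟩ := hi
      simpa using α.2 a
    · simpa [Finsupp.embDomain_of_notMem_range _ _ _ hi] using hp⟩

@[simp]
lemma val_embDomain (hp : 0 < p) (f : ι ↪ ι') (α : ReducedExp ι p) :
    (embDomain hp f α).1 = α.1.embDomain f :=
  rfl

lemma embDomain_injective (hp : 0 < p) (f : ι ↪ ι') :
    Function.Injective (embDomain (p := p) hp f) := fun _ _ h =>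
  Subtype.ext (Finsupp.embDomain_injective f (congrArg Subtype.val h))

noncomputable def single (hp : 1 < p) (i : ι) : ReducedExp ι p :=
  ⟨Finsupp.single i 1, fun j => by
    classical
    rw [Finsupp.single_apply]
    split_ifs <;> omega⟩

end ReducedExp

section PBasis

variable {A : Type*} [CommRing A] {p : ℕ}

lemma pow_mem_pPowers (a : A) : a ^ p ∈ pPowers A p := Algebra.subset_adjoin ⟨a, rfl⟩

lemma span_prodPow_eq_top {B : Set A}
    (h : Algebra.adjoin ℤ ((Set.range fun a : A => a ^ p) ∪ B) = ⊤) :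
    Submodule.span (pPowers A p) (Set.range (prodPow ((↑) : B → A))) = ⊤ := by
  rw [Algebra.adjoin_union_eq_adjoin_adjoin, ← Subalgebra.restrictScalars_top ℤ (S := pPowers A p)]
    at h
  replace h := Subalgebra.restrictScalars_injective ℤ h
  have hB : (Submonoid.closure B : Set A) = Set.range (prodPow ((↑) : B → A)) := by
    ext x
    have h := Submonoid.mem_closure_range_iff (f := ((↑) : B → A)) (x := x)
    rw [Subtype.range_coe] at h
    rw [SetLike.mem_coe, h, Set.mem_range]
    exact exists_congr fun _ => eq_comm
  rw [← hB, ← Algebra.adjoin_eq_span, h, Algebra.top_toSubmodule]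

lemma span_prodPow_reducedExp_eq_top (hp : 0 < p) {B : Set A}
    (h : Algebra.adjoin ℤ ((Set.range fun a : A => a ^ p) ∪ B) = ⊤) :
    Submodule.span (pPowers A p)
      (Set.range fun α : ReducedExp B p => prodPow ((↑) : B → A) α.1) = ⊤ := by
  rw [eq_top_iff, ← span_prodPow_eq_top h, Submodule.span_le]
  rintro _ ⟨α, rfl⟩
  rw [prodPow_eq_pow_mul _ p]
  exact Submodule.smul_mem _ (⟨_, pow_mem_pPowers _⟩ : pPowers A p)
    (Submodule.subset_span ⟨⟨expMod p α, expMod_lt hp α⟩, rfl⟩)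

noncomputable def IsPBasis.basis (hp : 0 < p) {B : Set A} (hB : IsPBasis ℤ p B) :
    Module.Basis (ReducedExp B p) (pPowers A p) A :=
  .mk hB.1 (span_prodPow_reducedExp_eq_top hp hB.2).ge

@[simp]
lemma IsPBasis.basis_apply (hp : 0 < p) {B : Set A} (hB : IsPBasis ℤ p B) (α : ReducedExp B p) :
    hB.basis hp α = prodPow ((↑) : B → A) α.1 :=
  Module.Basis.mk_apply ..

end PBasis

section PIndependent

variable {ι A : Type*} [CommRing A] {p : ℕ} {v : ι → A}

lemma pow_eq_zero_of_sum_pow_mul_prodPow_eq_zero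
    (hv : LinearIndependent (pPowers A p) fun α : ReducedExp ι p => prodPow v α.1)
    {T : Finset (ι →₀ ℕ)} (hT : ∀ r ∈ T, ∀ i, r i < p) (c : (ι →₀ ℕ) → A)
    (h : ∑ r ∈ T, c r ^ p * prodPow v r = 0) : ∀ r ∈ T, c r ^ p = 0 := by
  classical
  intro r hr
  have := linearIndependent_iff'.mp hv (T.subtype fun r => ∀ i, r i < p)
    (fun α => ⟨c α.1 ^ p, pow_mem_pPowers _⟩)
    ((Finset.sum_subtype_of_mem (fun r => c r ^ p * prodPow v r) hT).trans h)
    ⟨r, hT r hr⟩ (Finset.mem_subtype.mpr hr)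
  exact congrArg Subtype.val this

lemma eval₂_pComponent_eq_zero [DecidableEq ι] [IsReduced A] [ExpChar A p]
    (hv : LinearIndependent (pPowers A p) fun α : ReducedExp ι p => prodPow v α.1)
    {C : Type*} [CommSemiring C] (h : C →+* A) {P : MvPolynomial ι C}
    (hP : eval₂ ((frobenius A p).comp h) v P = 0) :
    ∀ r ∈ P.support.image (expMod p), eval₂ h v (pComponent p r P) = 0 := by
  have hfrob (Q : MvPolynomial ι C) :
      eval₂ ((frobenius A p).comp h) (v · ^ p) Q = eval₂ h v Q ^ p := by
    rw [← frobenius_def, eval₂_comp_left]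
    rfl
  rw [eval₂_eq_sum_pComponent _ _ p] at hP
  simp_rw [hfrob] at hP
  have hT : ∀ r ∈ P.support.image (expMod p), ∀ i, r i < p := by
    rintro _ hr i
    obtain ⟨m, -, rfl⟩ := Finset.mem_image.mp hr
    exact expMod_lt (expChar_pos A p) m i
  exact fun r hr => IsReduced.eq_zero _
    ⟨p, pow_eq_zero_of_sum_pow_mul_prodPow_eq_zero hv hT _ hP r hr⟩

theorem algebraicIndependent_of_linearIndependent_prodPow [Fact p.Prime] [CharP A p]
    [IsReduced A] [Algebra (ZMod p) A]
    (hv : LinearIndependent (pPowers A p) fun α : ReducedExp ι p => prodPow v α.1) :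
    AlgebraicIndependent (ZMod p) v := by
  classical
  have hp := (Fact.out : p.Prime)
  have : Nontrivial A := CharP.nontrivial_of_char_ne_one hp.ne_one
  have hfrob : (frobenius A p).comp (algebraMap (ZMod p) A) = algebraMap (ZMod p) A :=
    RingHom.ext_zmod _ _
  rw [algebraicIndependent_iff]
  suffices ∀ n, ∀ P : MvPolynomial ι (ZMod p), P.totalDegree = n → aeval v P = 0 → P = 0 from
    fun P => this _ P rfl
  intro n
  induction n using Nat.strong_induction_on with
  | _ n ih =>
  rintro P rfl hP
  rcases Nat.eq_zero_or_pos P.totalDegree with hn | hpos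
  · rw [totalDegree_eq_zero_iff_eq_C] at hn
    rw [hn, aeval_C, map_eq_zero_iff _ (algebraMap (ZMod p) A).injective] at hP
    rw [hn, hP, map_zero]
  refine eq_zero_of_pComponent_eq_zero p fun r hr => ih _ ?_ _ rfl ?_
  · exact (totalDegree_pComponent_le hp.pos r P).trans_lt (Nat.div_lt_self hpos hp.one_lt)
  · rw [aeval_def, ← hfrob] at hP
    exact eval₂_pComponent_eq_zero hv _ hP r hr

lemma injective_of_linearIndependent_prodPow [Nontrivial A] (hp : 1 < p)
    (h : LinearIndependent (pPowers A p) fun α : ReducedExp ι p => prodPow v α.1) :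
    Function.Injective v := fun i j hij => by
  have := h.injective (a₁ := .single hp i) (a₂ := .single hp j) (by simpa [ReducedExp.single])
  exact Finsupp.single_left_injective one_ne_zero (congrArg Subtype.val this)

lemma isPIndependent_range (hp : 0 < p) (hv : Function.Injective v)
    (h : LinearIndependent (pPowers A p) fun α : ReducedExp ι p => prodPow v α.1) :
    IsPIndependent ℤ p (Set.range v) := by
  set e := Equiv.ofInjective v hv
  unfold IsPIndependent
  convert h.comp _ (ReducedExp.embDomain_injective hp e.symm.toEmbedding) using 1
  funext α
  change prodPow ((↑) : Set.range v → A) α.1 = prodPow v (α.1.embDomain _)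
  rw [prodPow_embDomain]
  exact congrArg₂ _ (funext fun b => (Equiv.apply_ofInjective_symm hv b).symm) rfl

lemma IsPIndependent.zero_notMem [Nontrivial A] (hp : 1 < p) {B : Set A}
    (hB : IsPIndependent ℤ p B) : (0 : A) ∉ B := fun h0 =>
  hB.ne_zero (ReducedExp.single hp (⟨0, h0⟩ : B)) (by simp [ReducedExp.single, pMonomial])

end PIndependent

section FormallyEtale

variable {K B' : Type*} [CommRing K] [CommRing B'] {p : ℕ}

theorem formallyUnramified_of_adjoin_pow_union_eq_top [CharP K p] {k : Type*} [CommRing k]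
    [Algebra k K] {B : Set K} (hB : B ⊆ Set.range (algebraMap k K))
    (h : Algebra.adjoin ℤ ((Set.range fun a : K => a ^ p) ∪ B) = ⊤) :
    Algebra.FormallyUnramified k K := by
  constructor
  suffices (⊤ : Submodule K Ω[K⁄k]) ≤ ⊥ from
    (subsingleton_iff_forall_eq 0).mpr fun ω => this trivial
  rw [← KaehlerDifferential.span_range_derivation, Submodule.span_le]
  rintro _ ⟨x, rfl⟩
  have hD : (KaehlerDifferential.D k K).restrictScalars ℤ = 0 := by
    refine Derivation.ext_of_adjoin_eq_top _ h ?_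
    rintro _ (⟨a, rfl⟩ | hb)
    · simp [Derivation.leibniz_pow, ← Nat.cast_smul_eq_nsmul K]
    · obtain ⟨c, rfl⟩ := hB hb
      simp
  exact congr($hD x)

noncomputable def Ideal.quotientFrobenius [ExpChar B' p] (hp : 1 < p) {I : Ideal B'}
    (hI : I ^ 2 = ⊥) : B' ⧸ I →+* B' :=
  Ideal.Quotient.lift I (frobenius B' p) fun i hi => by
    have hi2 : i ^ 2 ∈ I ^ 2 := Ideal.pow_mem_pow hi 2
    rw [hI, Ideal.mem_bot] at hi2
    exact pow_eq_zero_of_le hp hi2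

@[simp]
lemma Ideal.quotientFrobenius_mk [ExpChar B' p] (hp : 1 < p) {I : Ideal B'} (hI : I ^ 2 = ⊥)
    (b : B') : Ideal.quotientFrobenius hp hI (Ideal.Quotient.mk I b) = b ^ p :=
  Ideal.Quotient.lift_mk ..

@[simp]
lemma Ideal.mk_quotientFrobenius [ExpChar B' p] (hp : 1 < p) {I : Ideal B'} (hI : I ^ 2 = ⊥)
    (y : B' ⧸ I) : Ideal.Quotient.mk I (Ideal.quotientFrobenius hp hI y) = y ^ p := by
  obtain ⟨b, rfl⟩ := Ideal.Quotient.mk_surjective y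
  rw [Ideal.quotientFrobenius_mk, map_pow]

lemma surjective_eval₂Hom_frobenius [ExpChar K p] {B : Set K}
    (h : Algebra.adjoin ℤ ((Set.range fun a : K => a ^ p) ∪ B) = ⊤) :
    Function.Surjective (eval₂Hom (frobenius K p) ((↑) : B → K)) := by
  have hle : Algebra.adjoin ℤ ((Set.range fun a : K => a ^ p) ∪ B) ≤
      (eval₂Hom (frobenius K p) ((↑) : B → K)).toIntAlgHom.range := by
    refine Algebra.adjoin_le ?_
    rintro _ (⟨a, rfl⟩ | hb)
    · exact ⟨C a, by simp [frobenius_def]⟩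
    · exact ⟨X ⟨_, hb⟩, by simp⟩
  rw [h] at hle
  exact fun x => hle trivial

theorem IsAbsolutePBasis.exists_lift [IsReduced K] [ExpChar K p] [ExpChar B' p] (hp : 1 < p)
    {B : Set K} (hB : IsAbsolutePBasis p B) {I : Ideal B'} (hI : I ^ 2 = ⊥) (f : K →+* B' ⧸ I)
    (ι : B → B') (hι : ∀ b, Ideal.Quotient.mk I (ι b) = f b) :
    ∃ g : K →+* B', (Ideal.Quotient.mk I).comp g = f ∧ ∀ b : B, g b = ι b := by
  classical
  set τ := (Ideal.quotientFrobenius hp hI).comp f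
  set e := eval₂Hom (frobenius K p) ((↑) : B → K)
  have he : Function.Surjective e := surjective_eval₂Hom_frobenius hB.2
  set ψ := eval₂Hom τ ι
  have hιτ : (ι · ^ p) = τ ∘ (↑) := funext fun b => by simp [τ, ← hι]
  -- Writing `P = ∑ r, Q_r(X ^ p) * X ^ r`, we get `e P = ∑ r, Q_r(b) ^ p * b ^ r`, so
  -- `p`-independence forces `Q_r(b) = 0`, whence `ψ P = ∑ r, τ (Q_r(b)) * ι ^ r = 0`.
  have hker : RingHom.ker e ≤ RingHom.ker ψ := fun P hP => by
    have hQ := eval₂_pComponent_eq_zero hB.1 (RingHom.id K) (P := P) hP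
    rw [RingHom.mem_ker, coe_eval₂Hom, eval₂_eq_sum_pComponent τ ι p, hιτ]
    refine Finset.sum_eq_zero fun r hr => ?_
    have hτ := eval₂_comp_left τ (RingHom.id K) (↑) (pComponent p r P)
    rw [RingHom.comp_id] at hτ
    rw [← hτ, hQ r hr, map_zero, zero_mul]
  set g := e.liftOfSurjective he ⟨ψ, hker⟩
  have hge (P) : g (e P) = ψ P := e.liftOfSurjective_comp_apply he ⟨ψ, hker⟩ P
  refine ⟨g, (RingHom.cancel_right he).mp (ringHom_ext (fun c => ?_) fun b => ?_), fun b => ?_⟩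
  · simp only [RingHom.comp_apply, hge]
    simp [ψ, τ, e, frobenius_def]
  · simp only [RingHom.comp_apply, hge]
    simp [ψ, e, hι]
  · simpa [e, ψ] using hge (X b)

end FormallyEtale

lemma IntermediateField.ringHom_ext_adjoin {F E R : Type*} [Field F] [Field E] [Algebra F E]
    [Ring R] {s : Set E} {φ₁ φ₂ : IntermediateField.adjoin F s →+* R}
    (hF : φ₁.comp (algebraMap F _) = φ₂.comp (algebraMap F _))
    (h : ∀ x (hx : x ∈ s), φ₁ ⟨x, subset_adjoin _ _ hx⟩ = φ₂ ⟨x, subset_adjoin _ _ hx⟩) :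
    φ₁ = φ₂ :=
  RingHom.ext fun ⟨x, hx⟩ ↦ adjoin_induction _ h (fun c ↦ congr($hF c))
    (fun _ _ _ _ h₁ h₂ ↦ by convert! congr_arg₂ (· + ·) h₁ h₂ <;> rw [← map_add] <;> rfl)
    (fun _ _ ↦ eq_on_inv₀ _ _)
    (fun _ _ _ _ h₁ h₂ ↦ by convert! congr_arg₂ (· * ·) h₁ h₂ <;> rw [← map_mul] <;> rfl) hx

theorem IsAbsolutePBasis.formallyEtale_adjoin {K : Type*} [Field K] {p : ℕ} [Fact p.Prime]
    [CharP K p] [Algebra (ZMod p) K] {B : Set K} (hB : IsAbsolutePBasis p B) :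
    Algebra.FormallyEtale (IntermediateField.adjoin (ZMod p) B) K := by
  have hp := (Fact.out : p.Prime)
  set k := IntermediateField.adjoin (ZMod p) B
  have hBk (b : B) : (b : K) ∈ k := IntermediateField.subset_adjoin _ _ b.2
  rw [Algebra.FormallyEtale.iff_formallyUnramified_and_formallySmooth]
  refine ⟨formallyUnramified_of_adjoin_pow_union_eq_top
    (fun b hb => ⟨⟨b, hBk ⟨b, hb⟩⟩, rfl⟩) hB.2, ?_⟩
  refine Algebra.FormallySmooth.of_comp_surjective fun B' _ _ I hI f => ?_
  rcases subsingleton_or_nontrivial B' with hB' | hB'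
  · exact ⟨default, Subsingleton.elim _ _⟩
  have : CharP B' p := charP_of_injective_algebraMap (algebraMap k B').injective p
  obtain ⟨g, hgf, hgB⟩ := hB.exists_lift hp.one_lt hI f.toRingHom
    (fun b => algebraMap k B' ⟨b, hBk b⟩) fun b => (f.commutes _).symm
  have hk : g.comp (algebraMap k K) = algebraMap k B' :=
    IntermediateField.ringHom_ext_adjoin (RingHom.ext_zmod _ _) fun b hb => hgB ⟨b, hb⟩
  exact ⟨{ g with commutes' := fun c => congr($hk c) }, AlgHom.ext fun x => congr($hgf x)⟩

section Surjective

variable {A A' : Type*} [CommRing A] [CommRing A'] {p : ℕ} (f : A →+* A')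

lemma image_range_pow_of_surjective (hf : Function.Surjective f) :
    f '' (Set.range fun a : A => a ^ p) = Set.range fun a : A' => a ^ p := by
  rw [← Set.range_comp, ← hf.range_comp]
  exact congrArg Set.range (funext fun a => map_pow f a p)

lemma map_pPowers_of_surjective (hf : Function.Surjective f) :
    (pPowers A p).map f.toIntAlgHom = pPowers A' p := by
  rw [AlgHom.map_adjoin]
  exact congrArg _ (image_range_pow_of_surjective f hf)

lemma adjoin_pow_union_image_eq_top (hf : Function.Surjective f) {B : Set A}
    (h : Algebra.adjoin ℤ ((Set.range fun a : A => a ^ p) ∪ B) = ⊤) :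
    Algebra.adjoin ℤ ((Set.range fun a : A' => a ^ p) ∪ f '' B) = ⊤ := by
  rw [← image_range_pow_of_surjective f hf, ← Set.image_union]
  change Algebra.adjoin ℤ (f.toIntAlgHom '' _) = ⊤
  rw [← AlgHom.map_adjoin, h, Algebra.map_top, AlgHom.range_eq_top]
  exact hf

end Surjective

section MonomialsMeeting

variable {R : Type*} [CommRing R] {p : ℕ} {B Z : Set R}

variable (B Z) in
def monomialsMeeting : Set R :=
  prodPow ((↑) : B → R) '' {γ | ∃ b ∈ γ.support, (b : R) ∈ Z}

lemma mul_mem_span_monomialsMeeting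
    (hB : Algebra.adjoin ℤ ((Set.range fun a : R => a ^ p) ∪ B) = ⊤) (r : R) {x : R}
    (hx : x ∈ Submodule.span (pPowers R p) (monomialsMeeting B Z)) :
    r * x ∈ Submodule.span (pPowers R p) (monomialsMeeting B Z) := by
  have hr : r ∈ Submodule.span (pPowers R p) (Set.range (prodPow ((↑) : B → R))) := by
    rw [span_prodPow_eq_top hB]
    trivial
  induction hr using Submodule.span_induction with
  | mem _ hm =>
    obtain ⟨δ, rfl⟩ := hm
    induction hx using Submodule.span_induction with
    | mem _ hg =>
      obtain ⟨γ, ⟨b, hb, hbZ⟩, rfl⟩ := hg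
      rw [← prodPow_add]
      refine Submodule.subset_span ⟨δ + γ, ⟨b, ?_, hbZ⟩, rfl⟩
      rw [Finsupp.mem_support_iff] at hb ⊢
      rw [Finsupp.add_apply]
      omega
    | zero => rw [mul_zero]; exact Submodule.zero_mem _
    | add _ _ _ _ h₁ h₂ => rw [mul_add]; exact Submodule.add_mem _ h₁ h₂
    | smul s _ _ h => rw [mul_smul_comm]; exact Submodule.smul_mem _ s h
  | zero => rw [zero_mul]; exact Submodule.zero_mem _
  | add _ _ _ _ h₁ h₂ => rw [add_mul]; exact Submodule.add_mem _ h₁ h₂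
  | smul s _ _ h => rw [smul_mul_assoc]; exact Submodule.smul_mem _ s h

lemma mem_span_monomialsMeeting_of_mem_span (hZB : Z ⊆ B)
    (hB : Algebra.adjoin ℤ ((Set.range fun a : R => a ^ p) ∪ B) = ⊤) {x : R}
    (hx : x ∈ Ideal.span Z) : x ∈ Submodule.span (pPowers R p) (monomialsMeeting B Z) := by
  induction hx using Submodule.span_induction with
  | mem z hz =>
    refine Submodule.subset_span
      ⟨Finsupp.single ⟨z, hZB hz⟩ 1, ⟨⟨z, hZB hz⟩, ?_, hz⟩, ?_⟩ <;> simp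
  | zero => exact Submodule.zero_mem _
  | add _ _ _ _ h₁ h₂ => exact Submodule.add_mem _ h₁ h₂
  | smul r _ _ h => exact mul_mem_span_monomialsMeeting hB r h

lemma IsPBasis.basis_repr_mem_span (hp : 0 < p) (hB : IsPBasis ℤ p B) (hZB : Z ⊆ B) {x : R}
    (hx : x ∈ Ideal.span Z) (α : ReducedExp B p) (hα : ∀ b ∈ α.1.support, (b : R) ∉ Z) :
    ((hB.basis hp).repr x α : R) ∈ Ideal.span Z := by
  classical
  have hxG := mem_span_monomialsMeeting_of_mem_span hZB hB.2 hx
  clear hx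
  induction hxG using Submodule.span_induction with
  | mem _ hg =>
    obtain ⟨γ, ⟨b, hb, hbZ⟩, rfl⟩ := hg
    rw [prodPow_eq_pow_mul _ p, ← hB.basis_apply hp ⟨expMod p γ, expMod_lt hp γ⟩]
    change ((hB.basis hp).repr ((⟨_, pow_mem_pPowers _⟩ : pPowers R p) • _) α : R) ∈ _
    rw [map_smul, Module.Basis.repr_self, Finsupp.smul_apply, Finsupp.single_apply]
    split_ifs with hγα
    -- The reduced part `γ % p` avoids `Z`, so the variable `b ∈ Z` of `γ` survives in `γ / p`.
    · have hmod : γ b % p = 0 := by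
        by_contra h
        exact hα b (by simpa [← hγα] using h) hbZ
      have hdiv : b ∈ (expDiv p γ).support := by
        rw [Finsupp.mem_support_iff, expDiv_apply]
        intro h
        apply Finsupp.mem_support_iff.mp hb
        rw [← Nat.div_add_mod (γ b) p, h, hmod, mul_zero, add_zero]
      simpa using Ideal.pow_mem_of_mem _
        (Ideal.mem_of_dvd _ (dvd_prodPow _ hdiv) (Ideal.subset_span hbZ)) p hp
    · simp
  | zero => simp
  | add _ _ _ _ h₁ h₂ => simpa using add_mem h₁ h₂
  | smul s _ _ h => simpa using Ideal.mul_mem_left _ _ h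

end MonomialsMeeting

section ResidueField

open IsLocalRing

variable {R : Type*} [CommRing R] [IsLocalRing R] {p : ℕ}

theorem linearIndependent_residue_prodPow (hp : 0 < p) {B₀ Z : Set R} (hdisj : Disjoint B₀ Z)
    (hZ : Ideal.span Z = maximalIdeal R) (hB : IsPBasis ℤ p (B₀ ∪ Z)) :
    LinearIndependent (pPowers (ResidueField R) p)
      fun α : ReducedExp B₀ p => prodPow (fun b : B₀ => residue R b) α.1 := by
  classical
  set J := ReducedExp.embDomain hp (Set.embeddingOfSubset _ _ (Set.subset_union_left (t := Z)))
  have hJ_free (α : ReducedExp B₀ p) : ∀ b ∈ (J α).1.support, (b : R) ∉ Z := by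
    intro b hb
    rw [ReducedExp.val_embDomain, Finsupp.support_embDomain] at hb
    obtain ⟨a, -, rfl⟩ := Finset.mem_map.mp hb
    exact Set.disjoint_left.mp hdisj a.2
  have hsurj (c : pPowers (ResidueField R) p) : ∃ s : pPowers R p, residue R s = c := by
    obtain ⟨s, hs, hsc⟩ := Subalgebra.mem_map.mp
      ((map_pPowers_of_surjective (residue R) residue_surjective).ge c.2)
    exact ⟨⟨s, hs⟩, hsc⟩
  choose σ hσ using hsurj
  rw [linearIndependent_iff']
  intro s g hg α hα
  -- Lift the relation to `R`: the lift lies in `M`, so its coordinate at `J α` does too.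
  set x := ∑ β ∈ s, σ (g β) • hB.basis hp (J β)
  have hx : x ∈ Ideal.span Z := by
    have hterm (β : ReducedExp B₀ p) : residue R (σ (g β) • hB.basis hp (J β)) =
        g β • prodPow (fun b : B₀ => residue R b) β.1 := by
      rw [Subalgebra.smul_def, smul_eq_mul, map_mul, hσ, hB.basis_apply, map_prodPow,
        ReducedExp.val_embDomain, prodPow_embDomain]
      rfl
    rw [hZ, ← residue_eq_zero_iff, map_sum]
    simpa only [hterm] using hg
  have hJ : Function.Injective J := ReducedExp.embDomain_injective hp _
  have hrepr : (hB.basis hp).repr x (J α) = σ (g α) := by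
    simp only [x, map_sum, map_smul, Module.Basis.repr_self, Finsupp.finsetSum_apply,
      Finsupp.smul_apply, Finsupp.single_apply, hJ.eq_iff, smul_eq_mul, mul_ite, mul_one,
      mul_zero, Finset.sum_ite_eq', if_pos hα]
  have := hB.basis_repr_mem_span hp Set.subset_union_right hx (J α) (hJ_free α)
  rw [hrepr, hZ, ← residue_eq_zero_iff] at this
  exact Subtype.ext ((hσ _).symm.trans this)

lemma adjoin_pow_union_residue_image_eq_top (hp : p ≠ 0) {B₀ Z : Set R}
    (hZ : Z ⊆ maximalIdeal R)
    (h : Algebra.adjoin ℤ ((Set.range fun a : R => a ^ p) ∪ (B₀ ∪ Z)) = ⊤) :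
    Algebra.adjoin ℤ ((Set.range fun a : ResidueField R => a ^ p) ∪ residue R '' B₀) = ⊤ := by
  refine eq_top_iff.mpr ((adjoin_pow_union_image_eq_top _ residue_surjective h).ge.trans
    (Algebra.adjoin_mono ?_))
  rintro _ (ha | ⟨b, hb | hb, rfl⟩)
  · exact Or.inl ha
  · exact Or.inr ⟨b, hb, rfl⟩
  · exact Or.inl ⟨0, by simp [(residue_eq_zero_iff b).mpr (hZ hb), zero_pow hp]⟩

theorem isAbsolutePBasis_residue_image (hp : 1 < p) {B₀ Z : Set R} (hdisj : Disjoint B₀ Z)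
    (hZ : Ideal.span Z = maximalIdeal R) (hB : IsAbsolutePBasis p (B₀ ∪ Z)) :
    IsAbsolutePBasis p (residue R '' B₀) := by
  have hli := linearIndependent_residue_prodPow (by omega) hdisj hZ hB
  refine ⟨?_, adjoin_pow_union_residue_image_eq_top (by omega) (hZ ▸ Ideal.subset_span) hB.2⟩
  rw [Set.image_eq_range]
  exact isPIndependent_range (by omega) (injective_of_linearIndependent_prodPow hp hli) hli

end ResidueField

theorem statement10_general {R : Type*} [CommRing R] [IsLocalRing R]
    (p : ℕ) [Fact p.Prime] [CharP (IsLocalRing.ResidueField R) p]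
    (d : ℕ) (z : Fin d → R) (hz : Ideal.span (Set.range z) = IsLocalRing.maximalIdeal R)
    (B₀ : Set R) (hB : IsAbsolutePBasis p (B₀ ∪ Set.range z))
    (hB₀M : B₀ ∩ (IsLocalRing.maximalIdeal R : Set R) ⊆ {0}) :
    letI : Algebra (ZMod p) (IsLocalRing.ResidueField R) :=
      ZMod.algebra (IsLocalRing.ResidueField R) p
    IsAbsolutePBasis p (IsLocalRing.residue R '' B₀) ∧
      AlgebraicIndependent (ZMod p) (fun b : B₀ => IsLocalRing.residue R (b : R)) ∧
      Algebra.FormallyEtale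
        (IntermediateField.adjoin (ZMod p) (IsLocalRing.residue R '' B₀))
        (IsLocalRing.ResidueField R) := by
  let _ : Algebra (ZMod p) (IsLocalRing.ResidueField R) := ZMod.algebra _ p
  have hp := (Fact.out : p.Prime)
  have hdisj : Disjoint B₀ (Set.range z) := Set.disjoint_left.mpr fun b hb hbz => by
    have hb0 : b = 0 := hB₀M ⟨hb, hz ▸ Ideal.subset_span hbz⟩
    exact hB.1.zero_notMem hp.one_lt (hb0 ▸ Or.inl hb)
  have hK := isAbsolutePBasis_residue_image hp.one_lt hdisj hz hB
  exact ⟨hK, algebraicIndependent_of_linearIndependent_prodPow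
    (linearIndependent_residue_prodPow hp.pos hdisj hz hB), hK.formallyEtale_adjoin⟩

theorem statement10 {R : Type*} [CommRing R] [IsLocalRing R]
    (p : ℕ) [Fact p.Prime] [CharP R p] [CharP (IsLocalRing.ResidueField R) p]
    (hreg : IsRegularLocalRing' R)
    (d : ℕ) (z : Fin d → R) (hz : Ideal.span (Set.range z) = IsLocalRing.maximalIdeal R)
    (B₀ : Set R) (hB : IsAbsolutePBasis p (B₀ ∪ Set.range z))
    (hB₀M : B₀ ∩ (IsLocalRing.maximalIdeal R : Set R) ⊆ {0}) :
    letI : Algebra (ZMod p) (IsLocalRing.ResidueField R) :=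
      ZMod.algebra (IsLocalRing.ResidueField R) p
    IsAbsolutePBasis p (IsLocalRing.residue R '' B₀) ∧
      AlgebraicIndependent (ZMod p) (fun b : B₀ => IsLocalRing.residue R (b : R)) ∧
      Algebra.FormallyEtale
        (IntermediateField.adjoin (ZMod p) (IsLocalRing.residue R '' B₀))
        (IsLocalRing.ResidueField R) :=
  statement10_general p d z hz B₀ hB hB₀M
end
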